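/- Let f : ℝ² → ℝ be L-Lipschitz, Q = [0,1]², and let ℓ₁, ℓ₂, ℓ₃ be three lines bounding a triangle △ with 5cQ ⊂ △ ⊂ Q (for a small constant c > 0), such that for each j there is an affine map A_j : ℝ² → ℝ with sup_{x ∈ ℓ_j ∩ Q} |f(x) − A_j(x)| ≤ β. Let A be the unique affine map agreeing with f at the three corners p₁, p₂, p₃ of △. Then sup_{x ∈ ℓ_j ∩ Q} |A(x) − A_j(x)| ≤ C(c) · β for each j. -/

import Mathlib

/-!
Since `5cQ ⊆ △`, the triangle contains a segment of half-length `5c/2` perpendicular to each side,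
so every corner is at distance at least `5c/2` from the opposite side, hence from the other corners.
A point of `ℓ_j ∩ Q` is therefore `(1 - t) p_i + t p_k` for the two corners `p_i, p_k ∈ ℓ_j`, with
`|t| ≤ diam Q / (5c/2)`. The affine function `A - A_j` equals `f - A_j` at `p_i` and `p_k`, so it is
at most `β` there, and at most `(1 + 2|t|) β` along the whole line.
-/

open scoped RealInnerProductSpace NNReal

/-- The unit square `[0,1]²` in the plane. -/
def unitSq : Set (EuclideanSpace ℝ (Fin 2)) := {x | ∀ i, x i ∈ Set.Icc (0 : ℝ) 1}

/-- The concentric cube `5cQ` for `Q = [0,1]²`. -/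
def fiveCQ (c : ℝ) : Set (EuclideanSpace ℝ (Fin 2)) := {x | ∀ i, |x i - 1 / 2| ≤ 5 * c / 2}

open Module

lemma abs_sub_le_of_mem_convexHull {V : Type*} [AddCommGroup V] [Module ℝ V] (φ : V →ₗ[ℝ] ℝ)
    {s : Set V} {r b : ℝ} (hs : ∀ y ∈ s, |φ y - r| ≤ b) {x : V} (hx : x ∈ convexHull ℝ s) :
    |φ x - r| ≤ b := by
  have hslab : convexHull ℝ s ⊆ φ ⁻¹' Set.Icc (r - b) (r + b) :=
    convexHull_min (fun y hy => by
        obtain ⟨h₁, h₂⟩ := abs_le.1 (hs y hy)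
        exact ⟨by linarith, by linarith⟩)
      ((convex_Icc _ _).linear_preimage φ)
  obtain ⟨h₁, h₂⟩ := hslab hx
  exact abs_le.2 ⟨by linarith, by linarith⟩

section InnerProductSpace

variable {E : Type*} [NormedAddCommGroup E] [InnerProductSpace ℝ E]

/-- If all points of a family but `p i` lie on the hyperplane `⟪e, ·⟫ = r`, its convex hull lies
in the slab `|⟪e, ·⟫ - r| ≤ |⟪e, p i⟫ - r|`, which must then contain the segment `q ± ρ • e`. -/
lemma le_dist_of_mem_convexHull {ι : Type*} {p : ι → E} {e q : E} {r ρ : ℝ} {i k : ι}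
    (he : ‖e‖ = 1) (hp : ∀ m, m ≠ i → ⟪e, p m⟫ = r) (hki : k ≠ i)
    (hplus : q + ρ • e ∈ convexHull ℝ (Set.range p))
    (hminus : q - ρ • e ∈ convexHull ℝ (Set.range p)) :
    ρ ≤ dist (p i) (p k) := by
  have hslab : ∀ y ∈ Set.range p, |innerₛₗ ℝ e y - r| ≤ |⟪e, p i⟫ - r| := by
    rintro _ ⟨m, rfl⟩
    by_cases hm : m = i
    · rw [hm, innerₛₗ_apply_apply]
    · rw [innerₛₗ_apply_apply, hp m hm, sub_self, abs_zero]
      exact abs_nonneg _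
  have hee : ⟪e, e⟫ = 1 := by rw [real_inner_self_eq_norm_sq, he, one_pow]
  have hup := abs_le.1 (abs_sub_le_of_mem_convexHull _ hslab hplus)
  have hdown := abs_le.1 (abs_sub_le_of_mem_convexHull _ hslab hminus)
  simp only [innerₛₗ_apply_apply, inner_add_right, inner_sub_right, real_inner_smul_right, hee]
    at hup hdown
  calc ρ ≤ |⟪e, p i⟫ - r| := by linarith [hup.2, hdown.1]
    _ = |⟪e, p i - p k⟫| := by rw [inner_sub_right, hp k hki]
    _ ≤ ‖e‖ * ‖p i - p k‖ := abs_real_inner_le_norm _ _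
    _ = dist (p i) (p k) := by rw [he, one_mul, dist_eq_norm]

lemma exists_eq_lineMap_of_inner_eq (hE : finrank ℝ E = 2) {e a b x : E} {r : ℝ} (he : e ≠ 0)
    (hab : a ≠ b) (ha : ⟪e, a⟫ = r) (hb : ⟪e, b⟫ = r) (hx : ⟪e, x⟫ = r) :
    ∃ t : ℝ, x = AffineMap.lineMap a b t := by
  have : Fact (finrank ℝ E = 2) := ⟨hE⟩
  have hxa : ⟪e, x - a⟫ = 0 := by rw [inner_sub_right, hx, ha, sub_self]
  have hba : ⟪e, b - a⟫ = 0 := by rw [inner_sub_right, hb, ha, sub_self]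
  obtain ⟨t, ht⟩ := Submodule.mem_span_singleton.1 <|
    Submodule.mem_span_singleton_of_inner_eq_zero_of_inner_eq_zero he (sub_ne_zero.2 hab.symm)
      hxa hba
  exact ⟨t, by rw [AffineMap.lineMap_apply_module', ht, sub_add_cancel]⟩

end InnerProductSpace

lemma abs_apply_lineMap_le {V P : Type*} [AddCommGroup V] [Module ℝ V] [AddTorsor V P]
    (g : P →ᵃ[ℝ] ℝ) {a b : P} {β t T : ℝ} (ha : |g a| ≤ β) (hb : |g b| ≤ β) (ht : |t| ≤ T) :
    |g (AffineMap.lineMap a b t)| ≤ (1 + 2 * T) * β := by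
  have hβ : 0 ≤ β := (abs_nonneg _).trans ha
  rw [g.apply_lineMap, AffineMap.lineMap_apply_module, smul_eq_mul, smul_eq_mul]
  calc |(1 - t) * g a + t * g b| ≤ |1 - t| * |g a| + |t| * |g b| := by
        rw [← abs_mul, ← abs_mul]; exact abs_add_le _ _
    _ ≤ (1 + |t|) * β + |t| * β := by
        gcongr
        exact (abs_sub _ _).trans (by rw [abs_one])
    _ ≤ (1 + 2 * T) * β := by nlinarith

lemma dist_le_two_of_mem_unitSq {x y : EuclideanSpace ℝ (Fin 2)} (hx : x ∈ unitSq)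
    (hy : y ∈ unitSq) : dist x y ≤ 2 := by
  have hcoord : ∀ i, ‖(x - y) i‖ ^ 2 ≤ 1 := fun i => by
    obtain ⟨hx₀, hx₁⟩ := hx i
    obtain ⟨hy₀, hy₁⟩ := hy i
    rw [PiLp.sub_apply, Real.norm_eq_abs, sq_abs]
    nlinarith
  rw [dist_eq_norm, EuclideanSpace.norm_eq, Real.sqrt_le_iff, Fin.sum_univ_two]
  exact ⟨by norm_num, by linarith [hcoord 0, hcoord 1]⟩

lemma center_add_mem_fiveCQ {c : ℝ} {v : EuclideanSpace ℝ (Fin 2)} (hv : ‖v‖ ≤ 5 * c / 2) :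
    WithLp.toLp 2 (fun _ => 1 / 2) + v ∈ fiveCQ c := fun i => by
  rw [PiLp.add_apply, add_sub_cancel_left, ← Real.norm_eq_abs]
  exact (PiLp.norm_apply_le v i).trans hv

lemma le_dist_of_fiveCQ_subset_convexHull {ι : Type*} {c r : ℝ} (hc : 0 ≤ c)
    {e : EuclideanSpace ℝ (Fin 2)} {p : ι → EuclideanSpace ℝ (Fin 2)} {i k : ι} (he : ‖e‖ = 1)
    (hp : ∀ m, m ≠ i → ⟪e, p m⟫ = r) (hki : k ≠ i) (hlow : fiveCQ c ⊆ convexHull ℝ (Set.range p)) :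
    5 * c / 2 ≤ dist (p i) (p k) := by
  have hmem : ∀ σ : ℝ, |σ| = 5 * c / 2 → WithLp.toLp 2 (fun _ => 1 / 2) + σ • e ∈ fiveCQ c :=
    fun σ hσ => center_add_mem_fiveCQ (by rw [norm_smul, he, mul_one, Real.norm_eq_abs, hσ])
  have hρ : |5 * c / 2| = 5 * c / 2 := abs_of_nonneg (by positivity)
  refine le_dist_of_mem_convexHull he hp hki (hlow (hmem _ hρ)) (hlow ?_)
  simpa only [neg_smul, ← sub_eq_add_neg] using hmem _ ((abs_neg _).trans hρ)

/-- Planar triangle comparison lemma: if the affine maps `A_j` approximate `f` up to `β`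
on the lines `ℓ_j ∩ Q` bounding a triangle `△` with `5cQ ⊆ △ ⊆ Q`, and `A` is the affine
map agreeing with `f` at the corners of `△`, then `|A − A_j| ≤ C(c)·β` on `ℓ_j ∩ Q`. -/
theorem stmt12 (c : ℝ) (hc : 0 < c) :
    ∃ C : ℝ, 0 < C ∧
      ∀ (L : ℝ≥0) (f : EuclideanSpace ℝ (Fin 2) → ℝ), LipschitzWith L f →
      ∀ (e : Fin 3 → EuclideanSpace ℝ (Fin 2)) (r : Fin 3 → ℝ), (∀ j, ‖e j‖ = 1) →
      ∀ p : Fin 3 → EuclideanSpace ℝ (Fin 2),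
        (∀ j i, i ≠ j → ⟪e j, p i⟫ = r j) →
        fiveCQ c ⊆ convexHull ℝ (Set.range p) →
        convexHull ℝ (Set.range p) ⊆ unitSq →
      ∀ (Aj : Fin 3 → (EuclideanSpace ℝ (Fin 2) →ᵃ[ℝ] ℝ)) (β : ℝ),
        (∀ j, ∀ x ∈ {x : EuclideanSpace ℝ (Fin 2) | ⟪e j, x⟫ = r j} ∩ unitSq,
          |f x - Aj j x| ≤ β) →
      ∀ A : EuclideanSpace ℝ (Fin 2) →ᵃ[ℝ] ℝ,
        (∀ i, A (p i) = f (p i)) →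
        ∀ j, ∀ x ∈ {x : EuclideanSpace ℝ (Fin 2) | ⟪e j, x⟫ = r j} ∩ unitSq,
          |A x - Aj j x| ≤ C * β := by
  refine ⟨1 + 2 * (2 / (5 * c / 2)), by positivity, ?_⟩
  intro L f _ e r he p hp hlow hhigh Aj β hβ A hA j x ⟨hxj, hxQ⟩
  have hsep : ∀ i k, k ≠ i → 5 * c / 2 ≤ dist (p i) (p k) := fun i k hki =>
    le_dist_of_fiveCQ_subset_convexHull hc.le (he i) (hp i) hki hlow
  obtain ⟨i, k, hij, hkj, hki⟩ : ∃ i k : Fin 3, i ≠ j ∧ k ≠ j ∧ k ≠ i :=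
    ⟨j + 1, j + 2, by fin_cases j <;> decide⟩
  have hpQ : ∀ m, p m ∈ unitSq := fun m => hhigh (subset_convexHull ℝ _ ⟨m, rfl⟩)
  have hpi : p i ≠ p k := dist_pos.1 <| (by positivity : 0 < 5 * c / 2).trans_le (hsep i k hki)
  obtain ⟨t, rfl⟩ := exists_eq_lineMap_of_inner_eq finrank_euclideanSpace_fin
    (ne_zero_of_norm_ne_zero (by rw [he j]; exact one_ne_zero)) hpi (hp j i hij) (hp j k hkj) hxj
  have ht : |t| ≤ 2 / (5 * c / 2) := by
    rw [le_div_iff₀ (by positivity)]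
    calc |t| * (5 * c / 2) ≤ |t| * dist (p i) (p k) := by gcongr; exact hsep i k hki
      _ = dist (AffineMap.lineMap (p i) (p k) t) (p i) := by
        rw [dist_lineMap_left, Real.norm_eq_abs]
      _ ≤ 2 := dist_le_two_of_mem_unitSq hxQ (hpQ i)
  have hend : ∀ m, m ≠ j → |(A - Aj j) (p m)| ≤ β := fun m hm => by
    simpa only [AffineMap.coe_sub, Pi.sub_apply, hA m] using hβ j (p m) ⟨hp j m hm, hpQ m⟩
  exact abs_apply_lineMap_le (A - Aj j) (hend i hij) (hend k hkj) ht
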